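/- For Q₅ = xyt - y³/(6σ), the triple T = (xyt - y³/(6σ)) u_x, X = yt(x F + J) - xy u - (y³/(6σ)) F, Y = σ x y t u_y - (y³/6) u_y + (y²/2) u - σ x t u satisfies ∂_t T + ∂_x X + ∂_y Y = (xyt - y³/(6σ)) Δ identically for all smooth u(x,y,t). -/

import Mathlib

noncomputable section

/-- Partial derivative with respect to the first variable `x`. -/
def px (u : ℝ → ℝ → ℝ → ℝ) : ℝ → ℝ → ℝ → ℝ :=
  fun x y t => deriv (fun x' => u x' y t) x

/-- Partial derivative with respect to the second variable `y`. -/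
def py (u : ℝ → ℝ → ℝ → ℝ) : ℝ → ℝ → ℝ → ℝ :=
  fun x y t => deriv (fun y' => u x y' t) y

/-- Partial derivative with respect to the third variable `t`. -/
def pt (u : ℝ → ℝ → ℝ → ℝ) : ℝ → ℝ → ℝ → ℝ :=
  fun x y t => deriv (fun t' => u x y t') t

/-- `u(x,y,t)` is smooth (C^∞) as a function of the triple. -/
def Smooth3 (u : ℝ → ℝ → ℝ → ℝ) : Prop :=
  ContDiff ℝ (⊤ : ℕ∞) (fun p : ℝ × ℝ × ℝ => u p.1 p.2.1 p.2.2)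

/-- The expanded fifth-order KP expression with general dispersion coefficient `d`. -/
def Delta (c d e f g σ : ℝ) (u : ℝ → ℝ → ℝ → ℝ) : ℝ → ℝ → ℝ → ℝ :=
  fun x y t =>
    pt (px u) x y t + c * px (px (px (px u))) x y t
      + d * px (px (px (px (px (px u))))) x y t
      + (e + f) * px u x y t * px (px (px u)) x y t
      + e * u x y t * px (px (px (px u))) x y t
      + f * (px (px u) x y t) ^ 2
      + 2 * g * u x y t * (px u x y t) ^ 2
      + g * (u x y t) ^ 2 * px (px u) x y t
      + σ * py (py u) x y t

/-- The flux `F` of equation (3.5). -/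
def Fflux (c e f g : ℝ) (u : ℝ → ℝ → ℝ → ℝ) : ℝ → ℝ → ℝ → ℝ :=
  fun x y t =>
    c * px (px (px u)) x y t + px (px (px (px (px u)))) x y t
      + e * u x y t * px (px (px u)) x y t
      + f * px u x y t * px (px u) x y t
      + g * (u x y t) ^ 2 * px u x y t

/-- The potential `J` of equation (3.7), with `∂ₓ J = -F`. -/
def Jpot (c e f g : ℝ) (u : ℝ → ℝ → ℝ → ℝ) : ℝ → ℝ → ℝ → ℝ :=
  fun x y t =>
    -(c * px (px u) x y t) - px (px (px (px u))) x y t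
      - e * u x y t * px (px u) x y t
      + ((e - f) / 2) * (px u x y t) ^ 2
      - (g / 3) * (u x y t) ^ 3
variable {u : ℝ → ℝ → ℝ → ℝ}

lemma px_eq (hu : Smooth3 u) (x y t : ℝ) :
    px u x y t = fderiv ℝ (fun p : ℝ × ℝ × ℝ => u p.1 p.2.1 p.2.2) (x, y, t) (1, 0, 0) := by
  have hd : DifferentiableAt ℝ (fun p : ℝ × ℝ × ℝ => u p.1 p.2.1 p.2.2) (x, y, t) :=
    (hu.differentiable (by simp)).differentiableAt
  exact (hd.hasFDerivAt.comp_hasDerivAt x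
    (HasDerivAt.prodMk (hasDerivAt_id x) (hasDerivAt_const x (y, t)))).deriv

lemma py_eq (hu : Smooth3 u) (x y t : ℝ) :
    py u x y t = fderiv ℝ (fun p : ℝ × ℝ × ℝ => u p.1 p.2.1 p.2.2) (x, y, t) (0, 1, 0) := by
  have hd : DifferentiableAt ℝ (fun p : ℝ × ℝ × ℝ => u p.1 p.2.1 p.2.2) (x, y, t) :=
    (hu.differentiable (by simp)).differentiableAt
  exact (hd.hasFDerivAt.comp_hasDerivAt y
    (HasDerivAt.prodMk (hasDerivAt_const y x) (HasDerivAt.prodMk (hasDerivAt_id y) (hasDerivAt_const y t)))).deriv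

lemma pt_eq (hu : Smooth3 u) (x y t : ℝ) :
    pt u x y t = fderiv ℝ (fun p : ℝ × ℝ × ℝ => u p.1 p.2.1 p.2.2) (x, y, t) (0, 0, 1) := by
  have hd : DifferentiableAt ℝ (fun p : ℝ × ℝ × ℝ => u p.1 p.2.1 p.2.2) (x, y, t) :=
    (hu.differentiable (by simp)).differentiableAt
  exact (hd.hasFDerivAt.comp_hasDerivAt t
    (HasDerivAt.prodMk (hasDerivAt_const t x) (HasDerivAt.prodMk (hasDerivAt_const t y) (hasDerivAt_id t)))).deriv

lemma smooth3_px (hu : Smooth3 u) : Smooth3 (px u) := by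
  have h : ContDiff ℝ (⊤ : ℕ∞) (fun p : ℝ × ℝ × ℝ =>
      fderiv ℝ (fun q : ℝ × ℝ × ℝ => u q.1 q.2.1 q.2.2) p (1, 0, 0)) :=
    (hu.fderiv_right (by simp)).clm_apply contDiff_const
  have he : (fun p : ℝ × ℝ × ℝ => px u p.1 p.2.1 p.2.2)
      = fun p : ℝ × ℝ × ℝ => fderiv ℝ (fun q : ℝ × ℝ × ℝ => u q.1 q.2.1 q.2.2) p (1, 0, 0) := by
    funext p
    exact px_eq hu p.1 p.2.1 p.2.2
  show ContDiff ℝ (⊤ : ℕ∞) (fun p : ℝ × ℝ × ℝ => px u p.1 p.2.1 p.2.2)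
  rw [he]; exact h

lemma smooth3_py (hu : Smooth3 u) : Smooth3 (py u) := by
  have h : ContDiff ℝ (⊤ : ℕ∞) (fun p : ℝ × ℝ × ℝ =>
      fderiv ℝ (fun q : ℝ × ℝ × ℝ => u q.1 q.2.1 q.2.2) p (0, 1, 0)) :=
    (hu.fderiv_right (by simp)).clm_apply contDiff_const
  have he : (fun p : ℝ × ℝ × ℝ => py u p.1 p.2.1 p.2.2)
      = fun p : ℝ × ℝ × ℝ => fderiv ℝ (fun q : ℝ × ℝ × ℝ => u q.1 q.2.1 q.2.2) p (0, 1, 0) := by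
    funext p
    exact py_eq hu p.1 p.2.1 p.2.2
  show ContDiff ℝ (⊤ : ℕ∞) (fun p : ℝ × ℝ × ℝ => py u p.1 p.2.1 p.2.2)
  rw [he]; exact h

lemma hasDerivAt_slice_x (hu : Smooth3 u) (x y t : ℝ) :
    HasDerivAt (fun x' => u x' y t) (px u x y t) x := by
  have hd : DifferentiableAt ℝ (fun p : ℝ × ℝ × ℝ => u p.1 p.2.1 p.2.2) (x, y, t) :=
    (hu.differentiable (by simp)).differentiableAt
  rw [px_eq hu x y t]
  exact hd.hasFDerivAt.comp_hasDerivAt x (HasDerivAt.prodMk (hasDerivAt_id x) (hasDerivAt_const x (y, t)))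

lemma hasDerivAt_slice_y (hu : Smooth3 u) (x y t : ℝ) :
    HasDerivAt (fun y' => u x y' t) (py u x y t) y := by
  have hd : DifferentiableAt ℝ (fun p : ℝ × ℝ × ℝ => u p.1 p.2.1 p.2.2) (x, y, t) :=
    (hu.differentiable (by simp)).differentiableAt
  rw [py_eq hu x y t]
  exact hd.hasFDerivAt.comp_hasDerivAt y
    (HasDerivAt.prodMk (hasDerivAt_const y x) (HasDerivAt.prodMk (hasDerivAt_id y) (hasDerivAt_const y t)))

lemma hasDerivAt_slice_t (hu : Smooth3 u) (x y t : ℝ) :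
    HasDerivAt (fun t' => u x y t') (pt u x y t) t := by
  have hd : DifferentiableAt ℝ (fun p : ℝ × ℝ × ℝ => u p.1 p.2.1 p.2.2) (x, y, t) :=
    (hu.differentiable (by simp)).differentiableAt
  rw [pt_eq hu x y t]
  exact hd.hasFDerivAt.comp_hasDerivAt t
    (HasDerivAt.prodMk (hasDerivAt_const t x) (HasDerivAt.prodMk (hasDerivAt_const t y) (hasDerivAt_id t)))

/-- conserved vector (3.16) for the multiplier `Q₅ = xyt - y³/(6σ)`. -/
theorem conserved_vector_Q5
    (c e f g σ : ℝ) (hσ : σ ≠ 0) (u : ℝ → ℝ → ℝ → ℝ) (hu : Smooth3 u) :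
    ∀ x y t : ℝ,
      pt (fun x' y' t' => (x' * y' * t' - y' ^ 3 / (6 * σ)) * px u x' y' t') x y t
        + px (fun x' y' t' =>
            y' * t' * (x' * Fflux c e f g u x' y' t' + Jpot c e f g u x' y' t')
              - x' * y' * u x' y' t'
              - (y' ^ 3 / (6 * σ)) * Fflux c e f g u x' y' t') x y t
        + py (fun x' y' t' =>
            σ * x' * y' * t' * py u x' y' t' - (y' ^ 3 / 6) * py u x' y' t'
              + (y' ^ 2 / 2) * u x' y' t'
              - σ * x' * t' * u x' y' t') x y t
      = (x * y * t - y ^ 3 / (6 * σ)) * Delta c 1 e f g σ u x y t := by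
  intro x y t
  have hu1 := smooth3_px hu
  have hu2 := smooth3_px hu1
  have hu3 := smooth3_px hu2
  have hu4 := smooth3_px hu3
  have hu5 := smooth3_px hu4
  have h0 := hasDerivAt_slice_x hu x y t
  have h1 := hasDerivAt_slice_x hu1 x y t
  have h2 := hasDerivAt_slice_x hu2 x y t
  have h3 := hasDerivAt_slice_x hu3 x y t
  have h4 := hasDerivAt_slice_x hu4 x y t
  have h5 := hasDerivAt_slice_x hu5 x y t
  have hyu := hasDerivAt_slice_y hu x y t
  have hyy := hasDerivAt_slice_y (smooth3_py hu) x y t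
  have htx := hasDerivAt_slice_t hu1 x y t
  -- T term
  have H1 := (((hasDerivAt_id t).const_mul (x * y)).sub_const (y ^ 3 / (6 * σ))).mul htx
  have E1 : pt (fun x' y' t' => (x' * y' * t' - y' ^ 3 / (6 * σ)) * px u x' y' t') x y t = _ :=
    H1.deriv
  -- X term
  have HF := ((((h3.const_mul c).add h5).add ((h0.const_mul e).mul h3)).add
      ((h1.const_mul f).mul h2)).add (((h0.pow 2).const_mul g).mul h1)
  have HJ := (((((h2.const_mul c).neg).sub h4).sub ((h0.const_mul e).mul h2)).add
      ((h1.pow 2).const_mul ((e - f) / 2))).sub ((h0.pow 3).const_mul (g / 3))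
  have HX := (((((hasDerivAt_id x).mul HF).add HJ).const_mul (y * t)).sub
      (((hasDerivAt_id x).mul_const y).mul h0)).sub (HF.const_mul (y ^ 3 / (6 * σ)))
  have E2 : px (fun x' y' t' =>
      y' * t' * (x' * Fflux c e f g u x' y' t' + Jpot c e f g u x' y' t')
        - x' * y' * u x' y' t'
        - (y' ^ 3 / (6 * σ)) * Fflux c e f g u x' y' t') x y t = _ := HX.deriv
  -- Y term
  have HY := (((((((hasDerivAt_id y).const_mul (σ * x)).mul_const t).mul hyy).sub
      (((hasDerivAt_pow 3 y).div_const 6).mul hyy)).add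
      (((hasDerivAt_pow 2 y).div_const 2).mul hyu)).sub
      (hyu.const_mul (σ * x * t)))
  have E3 : py (fun x' y' t' =>
      σ * x' * y' * t' * py u x' y' t' - (y' ^ 3 / 6) * py u x' y' t'
        + (y' ^ 2 / 2) * u x' y' t'
        - σ * x' * t' * u x' y' t') x y t = _ := HY.deriv
  rw [E1, E2, E3]
  simp only [Delta, Fflux, Jpot]
  push_cast
  simp only [id, Pi.pow_apply, Pi.add_apply, Pi.mul_apply]
  field_simp
  ring
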